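/- In the setting of the previous statement (K ≥ 1, C > 0, γ > 0 with Cγ ∈ ℤ, Q = [−C − 1/(2γ), C + 1/(2γ))^K, p an L-Lipschitz probability density on Q, and p^pc its piecewise-constant cube-average), let P and P^pc denote the probability measures on ℝ^K with densities p and p^pc with respect to Lebesgue measure. Then d_TV(P, P^pc) ≤ (1/2) · (2C + 1/γ)^K · L√K / γ. -/

import Mathlib

open MeasureTheory

/-- Total variation distance between two measures:
`d_TV(P,Q) = sup_{A measurable} |P(A) − Q(A)|`. -/
noncomputable def tvDist {α : Type*} [MeasurableSpace α] (P Q : Measure α) : ℝ :=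
  ⨆ A : {s : Set α // MeasurableSet s}, |(P A).toReal - (Q A).toReal|

/-- The `{C, γ⁻¹}`-grid in `ℝ^K`: points of sup-norm at most `C` all of whose
coordinates lie in `γ⁻¹ℤ`. -/
def gridSet {K : ℕ} (C γ : ℝ) : Set (Fin K → ℝ) :=
  {a | (∀ i, |a i| ≤ C) ∧ ∀ i, ∃ z : ℤ, a i = z / γ}

/-- The left-closed right-open cube of side `1/γ` centered at `a`. -/
def gridCube {K : ℕ} (γ : ℝ) (a : Fin K → ℝ) : Set (Fin K → ℝ) :=
  Set.univ.pi fun i => Set.Ico (a i - 1 / (2 * γ)) (a i + 1 / (2 * γ))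

/-- The piecewise-constant local average of `p` associated with the grid assignment
`xdis`: `p^pc(x) = γ^K ∫_{cube(x^dis(x))} p dλ`. -/
noncomputable def ppc {K : ℕ} (γ : ℝ) (xdis : (Fin K → ℝ) → (Fin K → ℝ))
    (p : (Fin K → ℝ) → ℝ) (x : Fin K → ℝ) : ℝ :=
  γ ^ K * ∫ y in gridCube γ (xdis x), p y

section Aux

lemma ico_mem_iff {γ t c : ℝ} (hγ : 0 < γ) :
    t ∈ Set.Ico (c/γ - 1/(2*γ)) (c/γ + 1/(2*γ)) ↔ c - 1/2 ≤ t*γ ∧ t*γ < c + 1/2 := by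
  have k1 : c/γ - 1/(2*γ) = (c - 1/2)/γ := by field_simp
  have k2 : c/γ + 1/(2*γ) = (c + 1/2)/γ := by field_simp
  rw [Set.mem_Ico, k1, k2, div_le_iff₀ hγ, lt_div_iff₀ hγ]

lemma Qico_iff {C γ t : ℝ} (hγ : 0 < γ) :
    t ∈ Set.Ico (-C - 1/(2*γ)) (C + 1/(2*γ)) ↔ -(C*γ) - 1/2 ≤ t*γ ∧ t*γ < C*γ + 1/2 := by
  have k1 : -C - 1/(2*γ) = (-(C*γ) - 1/2)/γ := by field_simp
  have k2 : C + 1/(2*γ) = (C*γ + 1/2)/γ := by field_simp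
  rw [Set.mem_Ico, k1, k2, div_le_iff₀ hγ, lt_div_iff₀ hγ]

lemma oneD_unique {γ t : ℝ} (hγ : 0 < γ) {z : ℤ}
    (ht : t ∈ Set.Ico ((z:ℝ)/γ - 1/(2*γ)) ((z:ℝ)/γ + 1/(2*γ))) :
    z = ⌊t*γ + 1/2⌋ := by
  obtain ⟨h1, h2⟩ := (ico_mem_iff hγ).mp ht
  symm
  rw [Int.floor_eq_iff]
  constructor <;> [skip; push_cast] <;> linarith

/-- The grid point with integer coordinates `z` (scaled by `1/γ`). -/
noncomputable def azf {K : ℕ} (γ : ℝ) (z : Fin K → ℤ) : Fin K → ℝ := fun i => (z i : ℝ)/γ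

/-- The integer coordinates of the cube containing `x`. -/
noncomputable def zfl {K : ℕ} (γ : ℝ) (x : Fin K → ℝ) : Fin K → ℤ := fun i => ⌊x i * γ + 1/2⌋

lemma cube_unique {K : ℕ} {γ : ℝ} (hγ : 0 < γ) {z : Fin K → ℤ} {x : Fin K → ℝ}
    (hx : x ∈ gridCube γ (azf γ z)) : z = zfl γ x := by
  funext i
  exact oneD_unique hγ (hx i (Set.mem_univ i))

lemma cube_cover {K : ℕ} {C γ : ℝ} (hγ : 0 < γ) {m : ℤ} (hm : C*γ = m)
    {x : Fin K → ℝ}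
    (hx : x ∈ Set.univ.pi fun _ : Fin K => Set.Ico (-C - 1/(2*γ)) (C + 1/(2*γ))) :
    zfl γ x ∈ Fintype.piFinset (fun _ : Fin K => Finset.Icc (-m) m) ∧
      x ∈ gridCube γ (azf γ (zfl γ x)) := by
  have key : ∀ i, zfl γ x i ∈ Finset.Icc (-m) m ∧
      x i ∈ Set.Ico ((zfl γ x i : ℝ)/γ - 1/(2*γ)) ((zfl γ x i : ℝ)/γ + 1/(2*γ)) := by
    intro i
    have ht := hx i (Set.mem_univ i)
    obtain ⟨h1, h2⟩ := (Qico_iff hγ).mp ht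
    have hfl : (⌊x i*γ+1/2⌋:ℝ) ≤ x i*γ + 1/2 := Int.floor_le _
    have hfl2 : x i*γ + 1/2 < ⌊x i*γ+1/2⌋ + 1 := Int.lt_floor_add_one _
    refine ⟨Finset.mem_Icc.mpr ⟨?_, ?_⟩, (ico_mem_iff hγ).mpr ⟨?_, ?_⟩⟩
    · have : (-m - 1 : ℤ) < ⌊x i*γ+1/2⌋ := by
        have : ((-m : ℝ) - 1) < ⌊x i*γ+1/2⌋ := by rw [← hm]; linarith
        exact_mod_cast this
      simp only [zfl]; omega
    · have : (⌊x i*γ+1/2⌋:ℤ) < m + 1 := by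
        have : (⌊x i*γ+1/2⌋ : ℝ) < (m:ℝ) + 1 := by rw [← hm]; linarith
        exact_mod_cast this
      simp only [zfl]; omega
    · simp only [zfl]; linarith
    · simp only [zfl]; linarith
  exact ⟨Fintype.mem_piFinset.mpr fun i => (key i).1, fun i _ => (key i).2⟩

lemma cube_subset {K : ℕ} {C γ : ℝ} (hγ : 0 < γ) {m : ℤ} (hm : C*γ = m)
    {z : Fin K → ℤ} (hz : z ∈ Fintype.piFinset (fun _ : Fin K => Finset.Icc (-m) m)) :
    gridCube γ (azf γ z) ⊆
      Set.univ.pi fun _ : Fin K => Set.Ico (-C - 1/(2*γ)) (C + 1/(2*γ)) := by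
  intro x hx i _
  have hzi := Finset.mem_Icc.mp (Fintype.mem_piFinset.mp hz i)
  have h1 : (-m:ℝ) ≤ z i := by exact_mod_cast hzi.1
  have h2 : (z i:ℝ) ≤ m := by exact_mod_cast hzi.2
  obtain ⟨ha, hb⟩ := (ico_mem_iff hγ).mp (hx i (Set.mem_univ i))
  refine (Qico_iff hγ).mpr ⟨?_, ?_⟩ <;> rw [hm] <;> linarith

lemma grid_eq {K : ℕ} {C γ : ℝ} (hγ : 0 < γ) {m : ℤ} (hm : C*γ = m)
    {a : Fin K → ℝ} (ha : a ∈ gridSet C γ) :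
    ∃ z ∈ Fintype.piFinset (fun _ : Fin K => Finset.Icc (-m) m), a = azf γ z := by
  obtain ⟨hb, hz⟩ := ha
  choose z hzz using hz
  refine ⟨z, Fintype.mem_piFinset.mpr fun i => ?_, funext fun i => hzz i⟩
  have h1 : |a i| ≤ C := hb i
  rw [hzz i] at h1
  have : |(z i : ℝ)| ≤ C * γ := by
    rw [abs_div, abs_of_pos hγ, div_le_iff₀ hγ] at h1
    linarith [h1]
  rw [hm] at this
  have h2 : |z i| ≤ m := by exact_mod_cast this
  rw [abs_le] at h2
  exact Finset.mem_Icc.mpr h2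

lemma cube_meas {K : ℕ} (γ : ℝ) (a : Fin K → ℝ) : MeasurableSet (gridCube γ a) :=
  MeasurableSet.univ_pi fun _ => measurableSet_Ico

lemma cube_vol {K : ℕ} {γ : ℝ} (hγ : 0 < γ) (a : Fin K → ℝ) :
    volume (gridCube γ a) = ENNReal.ofReal ((1/γ)^K) := by
  rw [gridCube, volume_pi_pi]
  have h : ∀ i : Fin K, volume (Set.Ico (a i - 1/(2*γ)) (a i + 1/(2*γ)))
      = ENNReal.ofReal (1/γ) := by
    intro i; rw [Real.volume_Ico]; congr 1; field_simp; norm_num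
  simp only [h, Finset.prod_const, Finset.card_univ, Fintype.card_fin]
  rw [← ENNReal.ofReal_pow (by positivity)]

end Aux

/-- The total variation distance between the measure with `L`-Lipschitz density `p` on
`Q = [−C−1/(2γ), C+1/(2γ))^K` and the measure with its piecewise-constant density `p^pc`
is at most `(1/2)·(2C+1/γ)^K·L√K/γ`. -/
theorem tvDist_ppc_le {K : ℕ} (hK : 1 ≤ K) (C γ L : ℝ) (hC : 0 < C) (hγ : 0 < γ)
    (hCγ : ∃ z : ℤ, C * γ = z)
    (Q : Set (Fin K → ℝ))
    (hQ : Q = Set.univ.pi fun _ : Fin K => Set.Ico (-C - 1 / (2 * γ)) (C + 1 / (2 * γ)))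
    (p : (Fin K → ℝ) → ℝ) (hp : Measurable p) (hp0 : ∀ x, 0 ≤ p x)
    (hsupp : ∀ x ∉ Q, p x = 0)
    (hp1 : ∫ x in Q, p x = 1)
    (hLip : ∀ x ∈ Q, ∀ x' ∈ Q,
      |p x - p x'| ≤ L * Real.sqrt (∑ i, (x i - x' i) ^ 2))
    (xdis : (Fin K → ℝ) → (Fin K → ℝ))
    (hxdis : ∀ x ∈ Q, xdis x ∈ gridSet C γ ∧ x ∈ gridCube γ (xdis x))
    (P Ppc : Measure (Fin K → ℝ))
    (hP : P = volume.withDensity (fun x => ENNReal.ofReal (p x)))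
    (hPpc : Ppc = volume.withDensity
      (fun x => ENNReal.ofReal (Set.indicator Q (ppc γ xdis p) x))) :
    tvDist P Ppc ≤ (1 / 2) * (2 * C + 1 / γ) ^ K * (L * Real.sqrt K / γ) := by
  classical
  obtain ⟨m, hm⟩ := hCγ
  set S := Fintype.piFinset (fun _ : Fin K => Finset.Icc (-m) m) with hS
  have hQm : MeasurableSet Q := by
    rw [hQ]; exact MeasurableSet.univ_pi fun _ => measurableSet_Ico
  set cu : (Fin K → ℤ) → Set (Fin K → ℝ) := fun z => gridCube γ (azf γ z) with hcudef
  have hcum : ∀ z, MeasurableSet (cu z) := fun z => cube_meas γ _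
  have hcusub : ∀ z ∈ S, cu z ⊆ Q := fun z hz => by
    rw [hQ]; exact cube_subset hγ hm hz
  have hcover : ∀ x ∈ Q, zfl γ x ∈ S ∧ x ∈ cu (zfl γ x) := fun x hx =>
    cube_cover hγ hm (by rw [← hQ]; exact hx)
  have hQU : Q = ⋃ z ∈ S, cu z := by
    apply Set.Subset.antisymm
    · intro x hx; exact Set.mem_biUnion (hcover x hx).1 (hcover x hx).2
    · intro x hx
      obtain ⟨z, hzS, hzx⟩ := Set.mem_iUnion₂.mp hx
      exact hcusub z hzS hzx
  -- volumes
  have hvolcu : ∀ z, volume (cu z) = ENNReal.ofReal ((1/γ)^K) := fun z => cube_vol hγ _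
  have hvollt : ∀ z, volume (cu z) < ⊤ := fun z => by
    rw [hvolcu z]; exact ENNReal.ofReal_lt_top
  have hvolto : ∀ z, (volume (cu z)).toReal = (1/γ)^K := fun z => by
    rw [hvolcu z, ENNReal.toReal_ofReal (by positivity)]
  have hγK : γ^K * (1/γ)^K = 1 := by
    rw [← mul_pow, mul_one_div, div_self hγ.ne', one_pow]
  -- integrability of p
  have hIQ : IntegrableOn p Q := by
    by_contra h
    rw [integral_undef h] at hp1; norm_num at hp1
  have hpind : Q.indicator p = p := by
    funext x; by_cases hx : x ∈ Q
    · simp [hx]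
    · simp [hx, hsupp x hx]
  have hInt : Integrable p := by
    rw [← hpind]; exact hIQ.integrable_indicator hQm
  have hIcu : ∀ z ∈ S, IntegrableOn p (cu z) := fun z hz => hIQ.mono_set (hcusub z hz)
  -- the step function g
  set c : (Fin K → ℤ) → ℝ := fun z => γ^K * ∫ y in cu z, p y with hcdef
  set g : (Fin K → ℝ) → ℝ := fun x => ∑ z ∈ S, Set.indicator (cu z) (fun _ => c z) x with hgdef
  have hc0 : ∀ z, 0 ≤ c z := fun z =>
    mul_nonneg (pow_nonneg hγ.le _) (integral_nonneg fun y => hp0 y)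
  have hg0 : ∀ x, 0 ≤ g x := fun x =>
    Finset.sum_nonneg fun z _ => Set.indicator_nonneg (fun _ _ => hc0 z) _
  have hgm : Measurable g :=
    Finset.measurable_sum S fun z _ => measurable_const.indicator (hcum z)
  have hgInt : Integrable g := by
    apply integrable_finset_sum
    intro z hz
    rw [integrable_indicator_iff (hcum z)]
    exact integrableOn_const (hvollt z).ne
  have hgoff : ∀ x ∉ Q, g x = 0 := by
    intro x hx
    apply Finset.sum_eq_zero
    intro z hz
    exact Set.indicator_of_notMem (fun hxz => hx (hcusub z hz hxz)) _
  have hgx : ∀ x ∈ Q, g x = c (zfl γ x) := by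
    intro x hx
    obtain ⟨hzS, hzx⟩ := hcover x hx
    have hsum := Finset.sum_eq_single_of_mem
      (f := fun z => (cu z).indicator (fun _ => c z) x) (zfl γ x) hzS
      (fun w _ hne => Set.indicator_of_notMem (fun hxw => hne (cube_unique hγ hxw)) _)
    show (∑ z ∈ S, (cu z).indicator (fun _ => c z) x) = c (zfl γ x)
    rw [hsum]
    exact Set.indicator_of_mem hzx _
  -- identification of the indicator density with g
  have hgind : Set.indicator Q (ppc γ xdis p) = g := by
    funext x
    by_cases hx : x ∈ Q
    · rw [Set.indicator_of_mem hx, hgx x hx]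
      obtain ⟨hgrid, hcube⟩ := hxdis x hx
      obtain ⟨w, hwS, hwa⟩ := grid_eq hγ hm hgrid
      have hwz : w = zfl γ x := cube_unique hγ (by rw [← hwa]; exact hcube)
      show γ ^ K * ∫ y in gridCube γ (xdis x), p y = c (zfl γ x)
      rw [hwa, hwz]
    · rw [Set.indicator_of_notMem hx, hgoff x hx]
  -- total integrals
  have hp_univ : ∫ x, p x = 1 := by
    rw [← hpind, integral_indicator hQm, hp1]
  have hg_univ : ∫ x, g x = 1 := by
    have h1 : ∫ x, g x = ∑ z ∈ S, (volume (cu z)).toReal * c z := by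
      rw [hgdef, integral_finset_sum]
      · refine Finset.sum_congr rfl fun z hz => ?_
        rw [integral_indicator_const (c z) (hcum z), smul_eq_mul]; rfl
      · intro z hz
        rw [integrable_indicator_iff (hcum z)]
        exact integrableOn_const (hvollt z).ne
    have h2 : ∀ z ∈ S, (volume (cu z)).toReal * c z = ∫ y in cu z, p y := by
      intro z hz
      rw [hvolto z, hcdef, ← mul_assoc, mul_comm ((1/γ)^K) (γ^K), hγK, one_mul]
    rw [h1, Finset.sum_congr rfl h2]
    have hdisj : (↑S : Set (Fin K → ℤ)).Pairwise (Function.onFun Disjoint cu) := by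
      intro z _ w _ hne
      rw [Function.onFun, Set.disjoint_left]
      intro x hxz hxw
      exact hne ((cube_unique hγ hxz).trans (cube_unique hγ hxw).symm)
    rw [← integral_biUnion_finset S (fun z _ => hcum z) hdisj (fun z hz => hIcu z hz), ← hQU, hp1]
  -- nonnegativity of L
  have hL : 0 ≤ L := by
    have h2γ : (0:ℝ) < 1/(2*γ) := by positivity
    have h4γ : (0:ℝ) < 1/(4*γ) := by positivity
    have h42 : 1/(4*γ) < 1/(2*γ) := one_div_lt_one_div_of_lt (by positivity) (by linarith)
    have h0Q : (fun _ : Fin K => (0:ℝ)) ∈ Q := by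
      rw [hQ]; intro i _
      exact Set.mem_Ico.mpr ⟨by linarith, by linarith⟩
    have h1Q : (fun _ : Fin K => 1/(4*γ)) ∈ Q := by
      rw [hQ]; intro i _
      exact Set.mem_Ico.mpr ⟨by linarith, by linarith⟩
    have hs : (0:ℝ) < Real.sqrt (∑ i : Fin K, ((0:ℝ) - 1/(4*γ))^2) := by
      apply Real.sqrt_pos.mpr
      rw [Finset.sum_const, Finset.card_univ, Fintype.card_fin, nsmul_eq_mul]
      have h1 : (0:ℝ) < ((0:ℝ) - 1/(4*γ))^2 := by rw [zero_sub, neg_sq]; positivity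
      have hK0 : (0:ℝ) < K := by exact_mod_cast hK
      exact mul_pos hK0 h1
    by_contra hneg
    push_neg at hneg
    have h := hLip _ h0Q _ h1Q
    nlinarith [abs_nonneg (p (fun _ : Fin K => (0:ℝ)) - p (fun _ : Fin K => 1/(4*γ)))]
  set ε : ℝ := L * Real.sqrt K / γ with hε
  have hε0 : 0 ≤ ε := by positivity
  -- pointwise bound
  have hdiffQ : ∀ x ∈ Q, |p x - g x| ≤ ε := by
    intro x hx
    obtain ⟨hzS, hzx⟩ := hcover x hx
    rw [hgx x hx]
    set z := zfl γ x
    have hbound : ∀ y ∈ cu z, ‖p x - p y‖ ≤ L * Real.sqrt K / γ := by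
      intro y hy
      have hyQ : y ∈ Q := hcusub z hzS hy
      have hcoord : ∀ i, (x i - y i)^2 ≤ (1/γ)^2 := by
        intro i
        have hxi := hzx i (Set.mem_univ i)
        have hyi := hy i (Set.mem_univ i)
        obtain ⟨ha1, ha2⟩ := hxi
        obtain ⟨hb1, hb2⟩ := hyi
        have hlen : (azf γ z i + 1/(2*γ)) - (azf γ z i - 1/(2*γ)) = 1/γ := by
          field_simp; norm_num
        have h1 : x i - y i ≤ 1/γ := by nlinarith
        have h2 : -(1/γ) ≤ x i - y i := by nlinarith
        nlinarith
      have hsum : ∑ i, (x i - y i)^2 ≤ K * (1/γ)^2 := by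
        calc ∑ i, (x i - y i)^2 ≤ ∑ _i : Fin K, (1/γ)^2 :=
              Finset.sum_le_sum fun i _ => hcoord i
          _ = K * (1/γ)^2 := by
              rw [Finset.sum_const, Finset.card_univ, Fintype.card_fin, nsmul_eq_mul]
      have hsq : Real.sqrt (∑ i, (x i - y i)^2) ≤ Real.sqrt K / γ := by
        calc Real.sqrt (∑ i, (x i - y i)^2) ≤ Real.sqrt (K * (1/γ)^2) :=
              Real.sqrt_le_sqrt hsum
          _ = Real.sqrt K * (1/γ) := by
              rw [Real.sqrt_mul (by positivity), Real.sqrt_sq (by positivity)]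
          _ = Real.sqrt K / γ := by ring
      calc ‖p x - p y‖ = |p x - p y| := rfl
        _ ≤ L * Real.sqrt (∑ i, (x i - y i)^2) := hLip x hx y hyQ
        _ ≤ L * (Real.sqrt K / γ) := mul_le_mul_of_nonneg_left hsq hL
        _ = L * Real.sqrt K / γ := by ring
    have hkey : p x - c z = γ^K * ∫ y in cu z, (p x - p y) := by
      rw [integral_sub (integrableOn_const (C := p x) (hvollt z).ne) (hIcu z hzS),
        setIntegral_const, smul_eq_mul, measureReal_def, hvolto z]
      have hcz : c z = γ^K * ∫ y in cu z, p y := rfl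
      rw [hcz]
      linear_combination (-(p x)) * hγK
    rw [hkey, abs_mul, abs_of_nonneg (pow_nonneg hγ.le K)]
    have hnorm : ‖∫ y in cu z, (p x - p y)‖ ≤ (L * Real.sqrt K / γ) * (volume (cu z)).toReal :=
      norm_setIntegral_le_of_norm_le_const (hvollt z) hbound
    rw [hvolto z] at hnorm
    calc γ^K * |∫ y in cu z, (p x - p y)| ≤ γ^K * ((L * Real.sqrt K / γ) * (1/γ)^K) := by
          apply mul_le_mul_of_nonneg_left _ (pow_nonneg hγ.le K)
          exact hnorm
      _ = (γ^K * (1/γ)^K) * (L * Real.sqrt K / γ) := by ring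
      _ = ε := by rw [hγK, one_mul]
  -- the difference function
  set f : (Fin K → ℝ) → ℝ := fun x => p x - g x with hfdef
  have hfInt : Integrable f := hInt.sub hgInt
  have hftot : ∫ x, f x = 0 := by
    rw [hfdef]
    rw [integral_sub hInt hgInt, hp_univ, hg_univ, sub_self]
  have hfabs : ∀ x, |f x| ≤ Set.indicator Q (fun _ => ε) x := by
    intro x
    by_cases hx : x ∈ Q
    · rw [Set.indicator_of_mem hx]; exact hdiffQ x hx
    · rw [Set.indicator_of_notMem hx, hfdef]
      simp only [hsupp x hx, hgoff x hx, sub_zero, abs_zero]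
      exact le_refl 0
  have hQvol : volume Q = ENNReal.ofReal ((2*C + 1/γ)^K) := by
    rw [hQ, volume_pi_pi]
    have h : ∀ i : Fin K, volume (Set.Ico (-C - 1/(2*γ)) (C + 1/(2*γ)))
        = ENNReal.ofReal (2*C + 1/γ) := by
      intro i; rw [Real.volume_Ico]; congr 1; field_simp; ring
    rw [Finset.prod_congr rfl (fun i _ => h i), Finset.prod_const, Finset.card_univ,
      Fintype.card_fin, ← ENNReal.ofReal_pow (by positivity)]
  have hQvollt : volume Q < ⊤ := by rw [hQvol]; exact ENNReal.ofReal_lt_top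
  have habsint : ∫ x, |f x| ≤ (2*C + 1/γ)^K * ε := by
    have hind : Integrable (Set.indicator Q (fun _ => ε)) := by
      rw [integrable_indicator_iff hQm]
      exact integrableOn_const hQvollt.ne
    calc ∫ x, |f x| ≤ ∫ x, Set.indicator Q (fun _ => ε) x :=
          integral_mono hfInt.abs hind hfabs
      _ = (volume Q).toReal * ε := by rw [integral_indicator_const ε hQm, smul_eq_mul]; rfl
      _ = (2*C + 1/γ)^K * ε := by
          rw [hQvol, ENNReal.toReal_ofReal (by positivity)]
  -- measure computations
  have happ : ∀ (q : (Fin K → ℝ) → ℝ), Integrable q → (∀ x, 0 ≤ q x) →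
      ∀ A : Set (Fin K → ℝ), MeasurableSet A →
      ((volume.withDensity fun x => ENNReal.ofReal (q x)) A).toReal = ∫ x in A, q x := by
    intro q hq hq0 A hA
    rw [withDensity_apply _ hA,
      ← ofReal_integral_eq_lintegral_ofReal hq.integrableOn
        (Filter.Eventually.of_forall hq0),
      ENNReal.toReal_ofReal (integral_nonneg hq0)]
  -- final bound for each measurable set
  have hmain : ∀ A : Set (Fin K → ℝ), MeasurableSet A →
      |(P A).toReal - (Ppc A).toReal| ≤ (1/2) * (2*C + 1/γ)^K * ε := by
    intro A hA
    have h1 : (P A).toReal = ∫ x in A, p x := by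
      rw [hP]; exact happ p hInt hp0 A hA
    have h2 : (Ppc A).toReal = ∫ x in A, g x := by
      rw [hPpc]
      have : (fun x => ENNReal.ofReal (Set.indicator Q (ppc γ xdis p) x))
          = fun x => ENNReal.ofReal (g x) := by rw [hgind]
      rw [this]; exact happ g hgInt hg0 A hA
    have hdA : (P A).toReal - (Ppc A).toReal = ∫ x in A, f x := by
      rw [h1, h2, hfdef, ← integral_sub hInt.integrableOn hgInt.integrableOn]
    have hsplit : (∫ x in A, f x) + ∫ x in Aᶜ, f x = 0 := by
      rw [integral_add_compl hA hfInt, hftot]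
    have habs1 : |∫ x in A, f x| ≤ ∫ x in A, |f x| := by
      have := norm_integral_le_integral_norm (μ := volume.restrict A) f
      simpa [Real.norm_eq_abs] using this
    have habs2 : |∫ x in A, f x| ≤ ∫ x in Aᶜ, |f x| := by
      have heq : |∫ x in A, f x| = |∫ x in Aᶜ, f x| := by
        rw [show ∫ x in A, f x = -∫ x in Aᶜ, f x by linarith [hsplit], abs_neg]
      rw [heq]
      have := norm_integral_le_integral_norm (μ := volume.restrict Aᶜ) f
      simpa [Real.norm_eq_abs] using this
    have hsum : (∫ x in A, |f x|) + ∫ x in Aᶜ, |f x| = ∫ x, |f x| := by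
      exact integral_add_compl hA hfInt.abs
    have h2abs : 2 * |∫ x in A, f x| ≤ ∫ x, |f x| := by linarith
    rw [hdA]
    linarith [habsint]
  -- conclude
  rw [tvDist]
  have hne : Nonempty {s : Set (Fin K → ℝ) // MeasurableSet s} :=
    ⟨⟨∅, MeasurableSet.empty⟩⟩
  refine ciSup_le fun A => ?_
  exact hmain A.1 A.2
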